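/- Let k >= 3 and e >= 3. If there exists a strongly equitable uniquely (k-1)-chromatic e-star system of order n_{k-1} ≡ 0 (mod 2e) whose k-1 colour classes each have size r > e, then there exists a strongly equitable k-chromatic e-star system of order k·n_{k-1}, with each colour class of size (k-1)r. -/

import Mathlib

structure EStar (n e : ℕ) where
  centre : Fin n
  leaves : Finset (Fin n)
  card_leaves : leaves.card = e
  centre_not_leaf : centre ∉ leaves

instance {n e : ℕ} : DecidableEq (EStar n e) := fun a b =>
  decidable_of_iff (a.centre = b.centre ∧ a.leaves = b.leaves)
    (by cases a; cases b; simp)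

/-- The edge set of an `e`-star: all edges joining the centre to a leaf. -/
def EStar.edges {n e : ℕ} (S : EStar n e) : Finset (Sym2 (Fin n)) :=
  S.leaves.image (fun a => s(S.centre, a))

/-- The vertex set of an `e`-star. -/
def EStar.verts {n e : ℕ} (S : EStar n e) : Finset (Fin n) :=
  insert S.centre S.leaves

/-- An `e`-star system of order `n`: a collection of `e`-stars whose edge sets
partition the edge set of the complete graph `K_n`. -/
structure EStarSystem (n e : ℕ) where
  stars : Finset (EStar n e)
  partition : ∀ p : Sym2 (Fin n), ¬ p.IsDiag →
    ∃! S, S ∈ stars ∧ p ∈ EStar.edges S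

/-- A weak colouring: no star of the system has all of its vertices one colour. -/
def IsWeakColouring {n e k : ℕ} (sys : EStarSystem n e) (c : Fin n → Fin k) : Prop :=
  ∀ S ∈ sys.stars, ∃ a ∈ S.leaves, c a ≠ c S.centre

def Colourable {n e : ℕ} (sys : EStarSystem n e) (k : ℕ) : Prop :=
  ∃ c : Fin n → Fin k, IsWeakColouring sys c

def Chromatic {n e : ℕ} (sys : EStarSystem n e) (k : ℕ) : Prop :=
  Colourable sys k ∧ ¬ Colourable sys (k - 1)

/-- The size of the colour class of colour `i`. -/
def classCard {n k : ℕ} (c : Fin n → Fin k) (i : Fin k) : ℕ :=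
  (Finset.univ.filter (fun v => c v = i)).card

def UniquelyColourable {n e : ℕ} (sys : EStarSystem n e) (k : ℕ) : Prop :=
  ∀ c₁ c₂ : Fin n → Fin k, IsWeakColouring sys c₁ → IsWeakColouring sys c₂ →
    ∃ π : Equiv.Perm (Fin k), c₂ = π ∘ c₁

/-!
Take `k` disjoint copies of the system and colour copy `j` by the given `(k-1)`-colouring
followed by `Fin.succAbove j`, so that copy `j` misses colour `j` and every colour class has
`(k-1)r` vertices. For copies `j < j'` the edges from a vertex `x` of copy `j` to copy `j'` are
split into stars centred at `x` whose leaf sets are the blocks of a partition of copy `j'` into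
`e`-sets. If the colour of `x` does not occur in copy `j'` any partition keeps these stars
properly coloured, and we use one in which every colour class contains a whole block;
otherwise we use a partition each of whose blocks contains a vertex of another colour, which
exists because `m / e ≤ m - r`. A weak `(k-1)`-colouring of the new system restricts on every copy to
a weak colouring of the old one, hence to a permutation of the unique colouring. Comparing the
permutations on two copies `j < j'`, the star from a vertex of copy `j` whose leaves are a block
inside the right colour class of copy `j'` is monochromatic.
-/

open Finset

/-- A partition of `α` into blocks of size `e`, recorded by the block of each point. -/
structure BlockPartition (α : Type*) (e : ℕ) where
  block : α → Finset α
  mem_block : ∀ y, y ∈ block y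
  card_block : ∀ y, #(block y) = e
  block_eq_of_mem : ∀ {y z}, z ∈ block y → block z = block y

namespace BlockPartition

variable {α β : Type*} [Fintype α] [DecidableEq β] {e : ℕ}

def ofFibres (f : α → β) (hf : ∀ y, #{z | f z = f y} = e) : BlockPartition α e where
  block y := {z | f z = f y}
  mem_block y := by simp
  card_block := hf
  block_eq_of_mem h := by simp_all

@[simp]
lemma mem_ofFibres_block {f : α → β} {hf : ∀ y, #{z | f z = f y} = e} {y z : α} :
    z ∈ (ofFibres f hf).block y ↔ f z = f y := by
  simp [ofFibres]

end BlockPartition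

section Partitions

variable {α : Type*}

lemma Finset.exists_card_filter_eq_ite (s : Finset α) {q e : ℕ} (hs : #s = q * e) :
    ∃ g : α → ℕ, ∀ i, #{x ∈ s | g x = i} = if i < q then e else 0 := by
  classical
  induction q generalizing s with
  | zero => exact ⟨0, by simp_all⟩
  | succ q ih =>
    obtain ⟨t, hts, ht⟩ := exists_subset_card_eq (show e ≤ #s by rw [hs]; nlinarith)
    obtain ⟨g, hg⟩ := ih (s \ t) (by rw [card_sdiff_of_subset hts, hs, ht, add_mul, one_mul,
      Nat.add_sub_cancel])
    refine ⟨fun x => if x ∈ t then q else g x, fun i => ?_⟩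
    have hin : {x ∈ {x ∈ s | (if x ∈ t then q else g x) = i} | x ∈ t} =
        if q = i then t else ∅ := by
      ext x
      by_cases hx : x ∈ t
      · have := hts hx
        split_ifs <;> simp_all
      · split_ifs <;> simp [hx]
    have hout : {x ∈ {x ∈ s | (if x ∈ t then q else g x) = i} | x ∉ t} =
        {x ∈ s \ t | g x = i} := by
      ext x; by_cases hx : x ∈ t <;> simp [hx]
    rw [← card_filter_add_card_filter_not (· ∈ t), hin, hout, hg]
    split_ifs <;> simp_all <;> omega

variable [Fintype α] [DecidableEq α]

lemma exists_blockPartition_monochromatic_block {κ : Type*} [Fintype κ] [DecidableEq κ] {e : ℕ}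
    (he : 0 < e) (hα : e ∣ Fintype.card α) (c : α → κ) (hc : ∀ b, e ≤ #{x | c x = b}) :
    ∃ P : BlockPartition α e, ∀ b, ∃ y, ∀ z ∈ P.block y, c z = b := by
  choose L hLc hL using fun b => exists_subset_card_eq (hc b)
  have hcL : ∀ {b x}, x ∈ L b → c x = b := fun hx => (mem_filter.mp (hLc _ hx)).2
  set U := univ.biUnion L
  have hU : ∀ x, x ∈ U ↔ x ∈ L (c x) := fun x => by
    simp only [U, mem_biUnion, mem_univ, true_and]
    exact ⟨fun ⟨b, hb⟩ => hcL hb ▸ hb, fun h => ⟨_, h⟩⟩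
  have hUcard : #U = Fintype.card κ * e := by
    rw [card_biUnion fun b _ b' _ hbb' =>
      disjoint_left.mpr fun _ hb hb' => hbb' ((hcL hb).symm.trans (hcL hb'))]
    simp [hL]
  obtain ⟨q, hq⟩ : e ∣ #Uᶜ := by
    rw [card_compl, hUcard]; exact Nat.dvd_sub hα (dvd_mul_left _ _)
  obtain ⟨g, hg⟩ := exists_card_filter_eq_ite Uᶜ (hq.trans (mul_comm _ _))
  let f : α → κ ⊕ ℕ := fun x => if x ∈ U then .inl (c x) else .inr (g x)
  have hfU : ∀ y ∈ U, ({z | f z = f y} : Finset α) = L (c y) := fun y hy => by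
    ext z; by_cases hz : z ∈ U <;> simp [f, hz, hy] <;> grind
  have hf : ∀ y, #{z | f z = f y} = e := by
    intro y
    by_cases hy : y ∈ U
    · rw [hfU y hy, hL]
    · have hfib : ({z | f z = f y} : Finset α) = {z ∈ Uᶜ | g z = g y} := by
        ext z; by_cases hz : z ∈ U <;> simp [f, hz, hy]
      have hne : 0 < #{z ∈ Uᶜ | g z = g y} := card_pos.mpr ⟨y, by simp [hy]⟩
      rw [hfib, hg]
      rw [hg] at hne
      split_ifs at hne ⊢ <;> omega
  refine ⟨.ofFibres f hf, fun b => ?_⟩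
  obtain ⟨y, hy⟩ := card_pos.mp (hL b ▸ he : 0 < #(L b))
  refine ⟨y, fun z hz => ?_⟩
  have hz' : z ∈ L (c y) := hfU y ((hU y).mpr (hcL hy ▸ hy)) ▸ by simpa using hz
  exact (hcL hz').trans (hcL hy)

lemma exists_blockPartition_forall_block_meets (W : Finset α) {N e : ℕ} (he : 0 < e)
    (hα : Fintype.card α = N * e) (hW : N ≤ #W) :
    ∃ P : BlockPartition α e, ∀ y, ∃ z ∈ P.block y, z ∈ W := by
  obtain ⟨W₁, hW₁W, hW₁⟩ := exists_subset_card_eq hW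
  obtain ⟨g₁, hg₁⟩ := exists_card_filter_eq_ite W₁ (q := N) (e := 1) (by simpa)
  obtain ⟨g₂, hg₂⟩ := exists_card_filter_eq_ite W₁ᶜ (q := N) (e := e - 1)
    (by rw [card_compl, hα, hW₁, Nat.mul_sub_one])
  let f : α → ℕ := fun x => if x ∈ W₁ then g₁ x else g₂ x
  have hfib : ∀ i, #{z | f z = i} = if i < N then e else 0 := by
    intro i
    rw [← card_filter_add_card_filter_not (· ∈ W₁)]
    have h₁ : ({z ∈ {z | f z = i} | z ∈ W₁} : Finset α) = {z ∈ W₁ | g₁ z = i} := by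
      ext z; by_cases hz : z ∈ W₁ <;> simp [f, hz]
    have h₂ : ({z ∈ {z | f z = i} | z ∉ W₁} : Finset α) = {z ∈ W₁ᶜ | g₂ z = i} := by
      ext z; by_cases hz : z ∈ W₁ <;> simp [f, hz]
    rw [h₁, h₂, hg₁, hg₂]
    split_ifs <;> omega
  have hlt : ∀ y, f y < N := fun y => by
    by_contra h
    have := hfib (f y)
    rw [if_neg h, card_eq_zero, filter_eq_empty_iff] at this
    exact this (mem_univ y) rfl
  refine ⟨.ofFibres f fun y => by rw [hfib, if_pos (hlt y)], fun y => ?_⟩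
  obtain ⟨z, hz⟩ := card_pos.mp (by rw [hg₁, if_pos (hlt y)]; exact one_pos :
    0 < #{z ∈ W₁ | g₁ z = f y})
  rw [mem_filter] at hz
  exact ⟨z, by simp [f, hz.1, hz.2], hW₁W hz.1⟩

end Partitions

theorem EStar.ext {n e : ℕ} {S T : EStar n e} (hc : S.centre = T.centre)
    (hl : S.leaves = T.leaves) : S = T := by
  cases S; cases T; cases hc; cases hl; rfl

theorem EStar.mk_mem_edges_iff {n e : ℕ} (S : EStar n e) {u v : Fin n} :
    s(u, v) ∈ S.edges ↔ (S.centre = u ∧ v ∈ S.leaves) ∨ (S.centre = v ∧ u ∈ S.leaves) := by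
  simp only [EStar.edges, mem_image, Sym2.eq_iff]
  grind

section Join

variable {k m e : ℕ}

abbrev inCopy (j : Fin k) (x : Fin m) : Fin (k * m) := finProdFinEquiv (j, x)

lemma inCopy_inj {j j' : Fin k} {x x' : Fin m} : inCopy j x = inCopy j' x' ↔ j = j' ∧ x = x' := by
  simp

lemma inCopy_mem_image_inCopy {i j : Fin k} {x : Fin m} {B : Finset (Fin m)} :
    inCopy i x ∈ B.image (inCopy j) ↔ i = j ∧ x ∈ B := by
  simp only [mem_image, inCopy_inj]
  grind

lemma exists_eq_inCopy (v : Fin (k * m)) : ∃ j x, v = inCopy j x :=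
  ⟨_, _, (finProdFinEquiv.apply_symm_apply v).symm⟩

def EStar.embed (j : Fin k) (S : EStar m e) : EStar (k * m) e where
  centre := inCopy j S.centre
  leaves := S.leaves.image (inCopy j)
  card_leaves := by rw [card_image_of_injective _ fun _ _ h => (inCopy_inj.mp h).2, S.card_leaves]
  centre_not_leaf := by simpa [inCopy_mem_image_inCopy] using S.centre_not_leaf

def crossStar (P : BlockPartition (Fin m) e) {j j' : Fin k} (h : j ≠ j') (x y : Fin m) :
    EStar (k * m) e where
  centre := inCopy j x
  leaves := (P.block y).image (inCopy j')
  card_leaves := by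
    rw [card_image_of_injective _ fun _ _ h => (inCopy_inj.mp h).2, P.card_block]
  centre_not_leaf := by simp [h.symm]

lemma mk_mem_edges_embed {j i i' : Fin k} {S : EStar m e} {a b : Fin m} :
    s(inCopy i a, inCopy i' b) ∈ (S.embed j).edges ↔ i = j ∧ i' = j ∧ s(a, b) ∈ S.edges := by
  simp only [EStar.mk_mem_edges_iff, EStar.embed, inCopy_mem_image_inCopy, inCopy_inj]
  grind

lemma mk_mem_edges_crossStar {P : BlockPartition (Fin m) e} {j j' i i' : Fin k} {h : j ≠ j'}
    {x y a b : Fin m} :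
    s(inCopy i a, inCopy i' b) ∈ (crossStar P h x y).edges ↔
      (i = j ∧ a = x ∧ i' = j' ∧ b ∈ P.block y) ∨ (i' = j ∧ b = x ∧ i = j' ∧ a ∈ P.block y) := by
  simp only [EStar.mk_mem_edges_iff, crossStar, inCopy_mem_image_inCopy, inCopy_inj]
  grind

variable (sys : EStarSystem m e) (P : Fin k → Fin k → Fin m → BlockPartition (Fin m) e)

def joinStars : Finset (EStar (k * m) e) :=
  (univ ×ˢ sys.stars).image (fun p => p.2.embed p.1) ∪
    (univ : Finset ({p : Fin k × Fin k // p.1 < p.2} × Fin m × Fin m)).image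
      fun q => crossStar (P q.1.1.1 q.1.1.2 q.2.1) q.1.2.ne q.2.1 q.2.2

variable {sys P}

lemma mem_joinStars {S : EStar (k * m) e} : S ∈ joinStars sys P ↔
    (∃ j, ∃ S₀ ∈ sys.stars, S₀.embed j = S) ∨
      ∃ (j j' : Fin k) (h : j < j') (x y : Fin m), crossStar (P j j' x) h.ne x y = S := by
  simp [joinStars]

lemma existsUnique_joinStars_of_lt {i i' : Fin k} (h : i < i') (a b : Fin m) :
    ∃! S, S ∈ joinStars sys P ∧ s(inCopy i a, inCopy i' b) ∈ S.edges := by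
  refine ⟨crossStar (P i i' a) h.ne a b, ⟨mem_joinStars.mpr (.inr ⟨i, i', h, a, b, rfl⟩),
    mk_mem_edges_crossStar.mpr (.inl ⟨rfl, rfl, rfl, (P i i' a).mem_block b⟩)⟩, ?_⟩
  rintro S ⟨hS, hpS⟩
  obtain ⟨j, S₀, -, rfl⟩ | ⟨j, j', hjj, x, y, rfl⟩ := mem_joinStars.mp hS
  · obtain ⟨rfl, rfl, -⟩ := mk_mem_edges_embed.mp hpS
    exact absurd h (lt_irrefl _)
  · obtain ⟨rfl, rfl, rfl, hb⟩ | ⟨rfl, -, rfl, -⟩ := mk_mem_edges_crossStar.mp hpS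
    · exact EStar.ext rfl (by simp [crossStar, (P _ _ _).block_eq_of_mem hb])
    · exact absurd h hjj.asymm

lemma existsUnique_joinStars_of_ne {i : Fin k} {a b : Fin m} (hab : a ≠ b) :
    ∃! S, S ∈ joinStars sys P ∧ s(inCopy i a, inCopy i b) ∈ S.edges := by
  obtain ⟨S₀, ⟨hS₀, habS₀⟩, huniq⟩ := sys.partition s(a, b) (by simpa using hab)
  refine ⟨S₀.embed i, ⟨mem_joinStars.mpr (.inl ⟨i, S₀, hS₀, rfl⟩),
    mk_mem_edges_embed.mpr ⟨rfl, rfl, habS₀⟩⟩, ?_⟩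
  rintro S ⟨hS, hpS⟩
  obtain ⟨j, S, hS', rfl⟩ | ⟨j, j', hjj, x, y, rfl⟩ := mem_joinStars.mp hS
  · obtain ⟨rfl, -, hab⟩ := mk_mem_edges_embed.mp hpS
    rw [huniq S ⟨hS', hab⟩]
  · obtain ⟨rfl, -, rfl, -⟩ | ⟨rfl, -, rfl, -⟩ := mk_mem_edges_crossStar.mp hpS <;>
      exact absurd hjj (lt_irrefl _)

lemma joinStars_partition (p : Sym2 (Fin (k * m))) (hp : ¬ p.IsDiag) :
    ∃! S, S ∈ joinStars sys P ∧ p ∈ S.edges := by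
  induction p using Sym2.ind with | _ u v => ?_
  obtain ⟨i, a, rfl⟩ := exists_eq_inCopy u
  obtain ⟨i', b, rfl⟩ := exists_eq_inCopy v
  rcases lt_trichotomy i i' with h | rfl | h
  · exact existsUnique_joinStars_of_lt h a b
  · exact existsUnique_joinStars_of_ne fun hab => hp (by simp [hab])
  · rw [Sym2.eq_swap]; exact existsUnique_joinStars_of_lt h b a

variable (sys P) in
def EStarSystem.join : EStarSystem (k * m) e := ⟨joinStars sys P, joinStars_partition⟩

lemma IsWeakColouring.comp_inCopy {n : ℕ} {c : Fin (k * m) → Fin n}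
    (hc : IsWeakColouring (sys.join P) c) (j : Fin k) : IsWeakColouring sys (c ∘ inCopy j) := by
  intro S hS
  obtain ⟨_, ha', hne⟩ := hc (S.embed j) (mem_joinStars.mpr (.inl ⟨j, S, hS, rfl⟩))
  obtain ⟨a, ha, rfl⟩ := mem_image.mp ha'
  exact ⟨a, ha, hne⟩

lemma not_colourable_join {n : ℕ} (huniq : UniquelyColourable sys n) {c : Fin m → Fin n}
    (hc : IsWeakColouring sys c) {j j' : Fin k} (hjj : j < j') (x : Fin m)
    (hP : ∀ b, ∃ y, ∀ z ∈ (P j j' x).block y, c z = b) : ¬ Colourable (sys.join P) n := by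
  rintro ⟨c₁, hc₁⟩
  obtain ⟨π, hπ⟩ := huniq c _ hc (hc₁.comp_inCopy j)
  obtain ⟨π', hπ'⟩ := huniq c _ hc (hc₁.comp_inCopy j')
  obtain ⟨y, hy⟩ := hP (π'.symm (π (c x)))
  obtain ⟨_, hz', hne⟩ := hc₁ (crossStar (P j j' x) hjj.ne x y)
    (mem_joinStars.mpr (.inr ⟨j, j', hjj, x, y, rfl⟩))
  obtain ⟨z, hz, rfl⟩ := mem_image.mp hz'
  apply hne
  change (c₁ ∘ inCopy j') z = (c₁ ∘ inCopy j) x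
  rw [hπ, hπ', Function.comp_apply, Function.comp_apply, hy z hz, Equiv.apply_symm_apply]

end Join

lemma card_eq_mul_of_forall_card_filter_eq {α κ : Type*} [Fintype α] [Fintype κ]
    [DecidableEq κ] {c : α → κ} {r : ℕ} (hc : ∀ b, #{x | c x = b} = r) :
    Fintype.card α = Fintype.card κ * r := by
  simpa [hc] using card_eq_sum_card_fiberwise (s := univ) (t := univ) (f := c)
    fun _ _ => mem_univ _

section SuccAbove

variable {α : Type*} [Fintype α] {n r : ℕ} {c : α → Fin n}

lemma card_filter_succAbove_comp (hc : ∀ a, #{x | c x = a} = r) (j i : Fin (n + 1)) :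
    #{x | j.succAbove (c x) = i} = if i = j then 0 else r := by
  split_ifs with h
  · simp [h, Fin.succAbove_ne]
  · obtain ⟨a, rfl⟩ := Fin.exists_succAbove_eq h
    simpa [Fin.succAbove_right_inj] using hc a

lemma exists_blockPartition_succAbove_ne [DecidableEq α] {e : ℕ} (hc : ∀ a, #{x | c x = a} = r)
    (hn : 2 ≤ n) (he : 2 ≤ e) (hα : e ∣ Fintype.card α) (j v : Fin (n + 1)) :
    ∃ P : BlockPartition α e, ∀ y, ∃ z ∈ P.block y, j.succAbove (c z) ≠ v := by
  have hdiv : Fintype.card α / e ≤ Fintype.card α - r := Nat.div_le_of_le_mul <| by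
    obtain ⟨n, rfl⟩ : ∃ n', n = n' + 2 := ⟨n - 2, by omega⟩
    rw [card_eq_mul_of_forall_card_filter_eq hc, Fintype.card_fin,
      show (n + 2) * r - r = (n + 1) * r from Nat.sub_eq_of_eq_add (by ring)]
    nlinarith [Nat.mul_le_mul_right ((n + 1) * r) he]
  have hW : Fintype.card α / e ≤ #{z | j.succAbove (c z) ≠ v} := by
    have hsplit := card_filter_add_card_filter_not (s := univ) (fun z => j.succAbove (c z) = v)
    have hv := card_filter_succAbove_comp hc j v
    rw [card_univ] at hsplit
    simp only [ne_eq]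
    split_ifs at hv <;> omega
  obtain ⟨P, hP⟩ := exists_blockPartition_forall_block_meets _ (by omega)
    (Nat.div_mul_cancel hα).symm hW
  exact ⟨P, fun y => by simpa using hP y⟩

end SuccAbove

section Colouring

variable {n m e : ℕ}

def succAboveColouring (c : Fin m → Fin n) (v : Fin ((n + 1) * m)) : Fin (n + 1) :=
  (finProdFinEquiv.symm v).1.succAbove (c (finProdFinEquiv.symm v).2)

@[simp]
lemma succAboveColouring_inCopy (c : Fin m → Fin n) (j : Fin (n + 1)) (x : Fin m) :
    succAboveColouring c (inCopy j x) = j.succAbove (c x) := by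
  simp [succAboveColouring]

lemma isWeakColouring_succAboveColouring {sys : EStarSystem m e}
    {P : Fin (n + 1) → Fin (n + 1) → Fin m → BlockPartition (Fin m) e} {c : Fin m → Fin n}
    (hc : IsWeakColouring sys c)
    (hP : ∀ j j' x y, ∃ z ∈ (P j j' x).block y, j'.succAbove (c z) ≠ j.succAbove (c x)) :
    IsWeakColouring (sys.join P) (succAboveColouring c) := by
  intro S hS
  obtain ⟨j, S₀, hS₀, rfl⟩ | ⟨j, j', -, x, y, rfl⟩ := mem_joinStars.mp hS
  · obtain ⟨a, ha, hne⟩ := hc S₀ hS₀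
    exact ⟨inCopy j a, mem_image_of_mem _ ha, by simpa [EStar.embed] using hne⟩
  · obtain ⟨z, hz, hne⟩ := hP j j' x y
    exact ⟨inCopy j' z, mem_image_of_mem _ hz, by simpa [crossStar] using hne⟩

lemma classCard_succAboveColouring {r : ℕ} {c : Fin m → Fin n} (hc : ∀ a, classCard c a = r)
    (i : Fin (n + 1)) : classCard (succAboveColouring c) i = n * r := by
  calc classCard (succAboveColouring c) i
      = #{q : Fin (n + 1) × Fin m | q.1.succAbove (c q.2) = i} :=
        card_equiv finProdFinEquiv.symm (by simp [succAboveColouring])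
    _ = ∑ j : Fin (n + 1), #{x | j.succAbove (c x) = i} := by
        simp only [card_filter, Fintype.sum_prod_type]
    _ = n * r := by
        rw [Fin.sum_univ_succAbove _ i]
        simp [card_filter_succAbove_comp hc, (Fin.succAbove_ne _ _).symm]

end Colouring

theorem stmt16_general (k e m r : ℕ) (hk : 3 ≤ k) (he : 3 ≤ e) (hr : e < r)
    (hmod : m % (2 * e) = 0)
    (sys : EStarSystem m e)
    (huniq : UniquelyColourable sys (k - 1))
    (hc : ∃ c : Fin m → Fin (k - 1), IsWeakColouring sys c ∧
      ∀ i : Fin (k - 1), classCard c i = r) :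
    ∃ sys' : EStarSystem (k * m) e, Chromatic sys' k ∧
      ∃ c' : Fin (k * m) → Fin k, IsWeakColouring sys' c' ∧
        ∀ i : Fin k, classCard c' i = (k - 1) * r := by
  obtain ⟨n, rfl⟩ : ∃ n, k = n + 1 := ⟨k - 1, by omega⟩
  replace huniq : UniquelyColourable sys n := huniq
  obtain ⟨c, hcw, hcr⟩ : ∃ c : Fin m → Fin n, IsWeakColouring sys c ∧ ∀ i, classCard c i = r := hc
  have hem : e ∣ Fintype.card (Fin m) := by
    rw [Fintype.card_fin]; exact (Dvd.intro_left 2 rfl).trans (Nat.dvd_of_mod_eq_zero hmod)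
  obtain ⟨Pmono, hPmono⟩ := exists_blockPartition_monochromatic_block (by omega) hem c
    fun b => hr.le.trans (hcr b).ge
  choose Q hQ using exists_blockPartition_succAbove_ne hcr (by omega) (by omega) hem
  -- the colour of `x` is absent from copy `j'` exactly when it is `j'`
  let P (j j' : Fin (n + 1)) (x : Fin m) :=
    if j.succAbove (c x) = j' then Pmono else Q j' (j.succAbove (c x))
  have hweak : IsWeakColouring (sys.join P) (succAboveColouring c) := by
    refine isWeakColouring_succAboveColouring hcw fun j j' x y => ?_
    by_cases h : j.succAbove (c x) = j'
    · exact ⟨y, by simp [P, h, Pmono.mem_block], h ▸ Fin.succAbove_ne _ _⟩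
    · simpa [P, h] using hQ j' _ y
  have x₀ : Fin m := ⟨0, by
    rw [← Fintype.card_fin m, card_eq_mul_of_forall_card_filter_eq hcr, Fintype.card_fin]
    exact Nat.mul_pos (by omega) (by omega)⟩
  refine ⟨sys.join P, ⟨⟨_, hweak⟩, not_colourable_join huniq hcw (c x₀).castSucc_lt_succ x₀
    ?_⟩, _, hweak, classCard_succAboveColouring hcr⟩
  simpa [P, Fin.succAbove_castSucc_self] using hPmono

/-- From a strongly equitable uniquely `(k-1)`-chromatic `e`-star system of order
`m ≡ 0 (mod 2e)` with colour classes of size `r > e`, one obtains a strongly equitable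
`k`-chromatic `e`-star system of order `k·m` with colour classes of size `(k-1)r`. -/
theorem stmt16 (k e m r : ℕ) (hk : 3 ≤ k) (he : 3 ≤ e) (hr : e < r)
    (hmod : m % (2 * e) = 0)
    (sys : EStarSystem m e)
    (hchr : Chromatic sys (k - 1)) (huniq : UniquelyColourable sys (k - 1))
    (hc : ∃ c : Fin m → Fin (k - 1), IsWeakColouring sys c ∧
      ∀ i : Fin (k - 1), classCard c i = r) :
    ∃ sys' : EStarSystem (k * m) e, Chromatic sys' k ∧
      ∃ c' : Fin (k * m) → Fin k, IsWeakColouring sys' c' ∧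
        ∀ i : Fin k, classCard c' i = (k - 1) * r :=
  stmt16_general k e m r hk he hr hmod sys huniq hc
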